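/- Let A, B : Fin m → Fin n → ℝ be the payoff matrices of a finite two-player general-sum game, and assume every x ∈ Δm admits a unique best response BR₂(x) ∈ Δn of player 2 and every y ∈ Δn admits a unique best response BR₁(y) ∈ Δm of player 1. Define the advantages 𝒱₁(x) = U₁(x, BR₂(x)) and 𝒱₂(y) = U₂(BR₁(y), y). If (x¹,y¹) and (x²,y²) are both Nash equilibria, then (x¹,y¹) Pareto dominates (x²,y²) if and only if 𝒱₁(x¹) ≥ 𝒱₁(x²) and 𝒱₂(y¹) ≥ 𝒱₂(y²). (Theorem 4 of the paper.) -/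

import Mathlib

def simplex (k : ℕ) : Set (Fin k → ℝ) :=
  {x | (∀ i, 0 ≤ x i) ∧ ∑ i, x i = 1}

def pay {m n : ℕ} (M : Fin m → Fin n → ℝ) (x : Fin m → ℝ) (y : Fin n → ℝ) : ℝ :=
  ∑ i, ∑ j, x i * M i j * y j

/-- Theorem 4: in a finite two-player general-sum game with payoff matrices `A`
(player 1) and `B` (player 2), assuming every strategy of either player admits a
unique best response of the other player (given by functions `BR₂`, `BR₁`), and
defining the advantages `𝒱₁(x) = U₁(x, BR₂(x))`, `𝒱₂(y) = U₂(BR₁(y), y)`: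
if `(x¹,y¹)` and `(x²,y²)` are both Nash equilibria, then `(x¹,y¹)` Pareto
dominates `(x²,y²)` iff `𝒱₁(x¹) ≥ 𝒱₁(x²)` and `𝒱₂(y¹) ≥ 𝒱₂(y²)`. -/
theorem pareto_dominance_iff_advantages {m n : ℕ} (A B : Fin m → Fin n → ℝ)
    (BR₂ : (Fin m → ℝ) → (Fin n → ℝ)) (BR₁ : (Fin n → ℝ) → (Fin m → ℝ))
    -- every `x ∈ Δm` admits `BR₂ x` as its unique best response of player 2
    (hBR₂ : ∀ x ∈ simplex m, BR₂ x ∈ simplex n ∧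
      (∀ y ∈ simplex n, pay B x y ≤ pay B x (BR₂ x)) ∧
      (∀ y ∈ simplex n, (∀ y' ∈ simplex n, pay B x y' ≤ pay B x y) → y = BR₂ x))
    -- every `y ∈ Δn` admits `BR₁ y` as its unique best response of player 1
    (hBR₁ : ∀ y ∈ simplex n, BR₁ y ∈ simplex m ∧
      (∀ x ∈ simplex m, pay A x y ≤ pay A (BR₁ y) y) ∧
      (∀ x ∈ simplex m, (∀ x' ∈ simplex m, pay A x' y ≤ pay A x y) → x = BR₁ y))
    (x₁ x₂ : Fin m → ℝ) (y₁ y₂ : Fin n → ℝ)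
    (hx₁ : x₁ ∈ simplex m) (hx₂ : x₂ ∈ simplex m)
    (hy₁ : y₁ ∈ simplex n) (hy₂ : y₂ ∈ simplex n)
    -- `(x₁,y₁)` is a Nash equilibrium
    (hNE₁ : (∀ x' ∈ simplex m, pay A x' y₁ ≤ pay A x₁ y₁) ∧
            (∀ y' ∈ simplex n, pay B x₁ y' ≤ pay B x₁ y₁))
    -- `(x₂,y₂)` is a Nash equilibrium
    (hNE₂ : (∀ x' ∈ simplex m, pay A x' y₂ ≤ pay A x₂ y₂) ∧
            (∀ y' ∈ simplex n, pay B x₂ y' ≤ pay B x₂ y₂)) :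
    (pay A x₂ y₂ ≤ pay A x₁ y₁ ∧ pay B x₂ y₂ ≤ pay B x₁ y₁) ↔
    (pay A x₂ (BR₂ x₂) ≤ pay A x₁ (BR₂ x₁) ∧
     pay B (BR₁ y₂) y₂ ≤ pay B (BR₁ y₁) y₁) := by
  -- Each equilibrium strategy is the unique best response to the other one,
  -- so the advantages are the equilibrium payoffs and the two sides coincide.
  have hBR₂x₁ : BR₂ x₁ = y₁ := ((hBR₂ x₁ hx₁).2.2 y₁ hy₁ hNE₁.2).symm
  have hBR₂x₂ : BR₂ x₂ = y₂ := ((hBR₂ x₂ hx₂).2.2 y₂ hy₂ hNE₂.2).symm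
  have hBR₁y₁ : BR₁ y₁ = x₁ := ((hBR₁ y₁ hy₁).2.2 x₁ hx₁ hNE₁.1).symm
  have hBR₁y₂ : BR₁ y₂ = x₂ := ((hBR₁ y₂ hy₂).2.2 x₂ hx₂ hNE₂.1).symm
  rw [hBR₂x₁, hBR₂x₂, hBR₁y₁, hBR₁y₂]
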